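/- arXiv:1811.05417 — 6 statements merged into one kernel-verified Lean document; each statement's English description precedes it below -/
import Mathlib

section
/- Let B be a Noetherian ring and let A be an algebra generated over B by elements x_1,...,x_m such that each x_i normalises B and for all i ≤ j there exist units q_{ij} with x_i x_j = q_{ij} x_j x_i. Then A is Noetherian. -/
/-!
Adjoin to `B` first the central units `q i j` and their inverses, then `x 0, …, x (m-1)` one at
a time. Each `x k` normalises the ring generated by `B`, the `q`'s and the earlier `x i`, since
`x k * x i = (q i k)⁻¹ * x i * x k` and `x i * x k = x k * (q i k * x i)`. So it suffices that
adjoining one normalising element `x` to a Noetherian ring `R` gives a Noetherian ring. Using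
`R x = x R`, every element is a sum `∑ xⁱ rᵢ`, and the leading coefficients `r` of the elements of
degree `n` of an ideal `I` form an ideal `Lₙ(I)` of `R`. As in Hilbert's basis theorem, `Lₙ(I)`
increases with `n` and stabilises, so finitely many elements of `I` realise generators of all the
`Lₙ(I)`, and they generate `I` by induction on the degree.
-/

namespace NormalizingExtension

variable {R A : Type*} [Ring R] [Ring A]

/-- `filtration f x n = f R + x f R + ⋯ + x ^ (n - 1) f R`, the elements of `x`-degree `< n`. -/
def filtration (f : R →+* A) (x : A) : ℕ → AddSubgroup A
  | 0 => ⊥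
  | n + 1 => filtration f x n ⊔ ((AddMonoidHom.mulLeft (x ^ n)).comp f.toAddMonoidHom).range

variable {f : R →+* A} {x : A}

theorem mem_filtration_zero {a : A} : a ∈ filtration f x 0 ↔ a = 0 :=
  AddSubgroup.mem_bot

theorem mem_filtration_succ {n : ℕ} {a : A} :
    a ∈ filtration f x (n + 1) ↔ ∃ p ∈ filtration f x n, ∃ c, p + x ^ n * f c = a := by
  simp only [filtration, AddSubgroup.mem_sup, AddMonoidHom.mem_range, AddMonoidHom.coe_comp,
    Function.comp_apply, AddMonoidHom.coe_mulLeft, RingHom.toAddMonoidHom_eq_coe,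
    AddMonoidHom.coe_coe]
  constructor
  · rintro ⟨p, hp, _, ⟨c, rfl⟩, rfl⟩
    exact ⟨p, hp, c, rfl⟩
  · rintro ⟨p, hp, c, rfl⟩
    exact ⟨p, hp, _, ⟨c, rfl⟩, rfl⟩

theorem pow_mul_map_mem_filtration (n : ℕ) (c : R) : x ^ n * f c ∈ filtration f x (n + 1) :=
  mem_filtration_succ.mpr ⟨0, zero_mem _, c, zero_add _⟩

theorem filtration_mono : Monotone (filtration f x) :=
  monotone_nat_of_le_succ fun _ => le_sup_left

theorem exists_map_mul_pow_eq (hl : ∀ r, ∃ r', x * f r = f r' * x) (n : ℕ) (s : R) :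
    ∃ t, f t * x ^ n = x ^ n * f s := by
  induction n with
  | zero => exact ⟨s, by simp⟩
  | succ n ih =>
    obtain ⟨t, ht⟩ := ih
    obtain ⟨t', ht'⟩ := hl t
    exact ⟨t', by rw [pow_succ', ← mul_assoc, ← ht', mul_assoc, ht, mul_assoc]⟩

theorem exists_pow_mul_map_eq (hr : ∀ r, ∃ r', f r * x = x * f r') (n : ℕ) (s : R) :
    ∃ t, x ^ n * f t = f s * x ^ n := by
  induction n with
  | zero => exact ⟨s, by simp⟩
  | succ n ih =>
    obtain ⟨t, ht⟩ := ih
    obtain ⟨t', ht'⟩ := hr t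
    exact ⟨t', by rw [pow_succ, mul_assoc, ← ht', ← mul_assoc, ht, mul_assoc]⟩

theorem map_mul_mem_filtration (hr : ∀ r, ∃ r', f r * x = x * f r') (c : R) {n : ℕ} {a : A}
    (ha : a ∈ filtration f x n) : f c * a ∈ filtration f x n := by
  induction n generalizing a with
  | zero => simp [mem_filtration_zero.mp ha, zero_mem]
  | succ n ih =>
    obtain ⟨p, hp, d, rfl⟩ := mem_filtration_succ.mp ha
    obtain ⟨t, ht⟩ := exists_pow_mul_map_eq hr n c
    refine mem_filtration_succ.mpr ⟨f c * p, ih hp, t * d, ?_⟩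
    rw [mul_add, map_mul, ← mul_assoc, ht, mul_assoc]

theorem pow_mul_mem_filtration (k : ℕ) {n : ℕ} {a : A} (ha : a ∈ filtration f x n) :
    x ^ k * a ∈ filtration f x (k + n) := by
  induction n generalizing a with
  | zero => simp [mem_filtration_zero.mp ha, zero_mem]
  | succ n ih =>
    obtain ⟨p, hp, c, rfl⟩ := mem_filtration_succ.mp ha
    refine mem_filtration_succ.mpr ⟨x ^ k * p, ih hp, c, ?_⟩
    rw [mul_add, ← mul_assoc, ← pow_add]
    rfl

theorem mul_mem_filtration (hr : ∀ r, ∃ r', f r * x = x * f r') {n k : ℕ} {a b : A}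
    (ha : a ∈ filtration f x n) (hb : b ∈ filtration f x k) : a * b ∈ filtration f x (n + k) := by
  induction n generalizing a with
  | zero => simp [mem_filtration_zero.mp ha, zero_mem]
  | succ n ih =>
    obtain ⟨p, hp, c, rfl⟩ := mem_filtration_succ.mp ha
    rw [add_mul, mul_assoc]
    refine add_mem (filtration_mono (by omega) (ih hp)) ?_
    exact filtration_mono (by omega) (pow_mul_mem_filtration n (map_mul_mem_filtration hr c hb))

theorem exists_mem_filtration (hr : ∀ r, ∃ r', f r * x = x * f r')
    (hgen : Subring.closure (insert x (Set.range f)) = ⊤) (a : A) :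
    ∃ n, a ∈ filtration f x n := by
  have ha : a ∈ Subring.closure (insert x (Set.range f)) := hgen ▸ Subring.mem_top a
  induction ha using Subring.closure_induction with
  | mem a h =>
    obtain h | ⟨c, rfl⟩ := h
    · exact ⟨2, by rw [h]; simpa using pow_mul_map_mem_filtration (f := f) 1 1⟩
    · exact ⟨1, by simpa using pow_mul_map_mem_filtration (x := x) 0 c⟩
  | zero => exact ⟨0, zero_mem _⟩
  | one => exact ⟨1, by simpa using pow_mul_map_mem_filtration (f := f) (x := x) 0 1⟩
  | add a b _ _ iha ihb =>
    obtain ⟨n, hn⟩ := iha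
    obtain ⟨k, hk⟩ := ihb
    exact ⟨max n k, add_mem (filtration_mono (le_max_left n k) hn)
      (filtration_mono (le_max_right n k) hk)⟩
  | neg a _ iha =>
    obtain ⟨n, hn⟩ := iha
    exact ⟨n, neg_mem hn⟩
  | mul a b _ _ iha ihb =>
    obtain ⟨n, hn⟩ := iha
    obtain ⟨k, hk⟩ := ihb
    exact ⟨n + k, mul_mem_filtration hr hn hk⟩

/-- The ideal of leading coefficients `r` (written to the right of `x ^ n`) of elements of `I`
of `x`-degree at most `n`. -/
def leadingIdeal (hl : ∀ r, ∃ r', x * f r = f r' * x) (hr : ∀ r, ∃ r', f r * x = x * f r')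
    (I : Ideal A) (n : ℕ) : Ideal R where
  carrier := {r | ∃ g ∈ I, g - x ^ n * f r ∈ filtration f x n}
  zero_mem' := ⟨0, I.zero_mem, by simp [zero_mem]⟩
  add_mem' := by
    rintro a b ⟨g, hg, hgp⟩ ⟨h, hh, hhp⟩
    refine ⟨g + h, I.add_mem hg hh, ?_⟩
    convert add_mem hgp hhp using 1
    rw [map_add, mul_add]
    abel
  smul_mem' := by
    rintro s r ⟨g, hg, hgp⟩
    obtain ⟨t, ht⟩ := exists_map_mul_pow_eq hl n s
    refine ⟨f t * g, I.mul_mem_left _ hg, ?_⟩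
    convert map_mul_mem_filtration hr t hgp using 1
    rw [mul_sub, smul_eq_mul, map_mul, ← mul_assoc, ← ht, mul_assoc]

section leadingIdeal

variable {hl : ∀ r, ∃ r', x * f r = f r' * x} {hr : ∀ r, ∃ r', f r * x = x * f r'}

theorem leadingIdeal_mono_right (I : Ideal A) : Monotone (leadingIdeal hl hr I) := by
  refine monotone_nat_of_le_succ fun n r ⟨g, hg, hgp⟩ => ⟨x * g, I.mul_mem_left _ hg, ?_⟩
  have hxg := pow_mul_mem_filtration 1 hgp
  rwa [add_comm, mul_sub, ← mul_assoc, pow_one, ← pow_succ'] at hxg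

theorem leadingIdeal_mono_left {I J : Ideal A} (hIJ : I ≤ J) (n : ℕ) :
    leadingIdeal hl hr I n ≤ leadingIdeal hl hr J n :=
  fun _ ⟨g, hg, hgp⟩ => ⟨g, hIJ hg, hgp⟩

/-- Induction on the `x`-degree: subtracting an element of `J` with the same leading coefficient
lowers the degree. -/
theorem le_of_leadingIdeal_le (hgen : Subring.closure (insert x (Set.range f)) = ⊤)
    {I J : Ideal A} (hJI : J ≤ I) (h : ∀ n, leadingIdeal hl hr I n ≤ leadingIdeal hl hr J n) :
    I ≤ J := by
  suffices ∀ n, ∀ a ∈ I, a ∈ filtration f x n → a ∈ J by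
    intro a ha
    obtain ⟨n, hn⟩ := exists_mem_filtration hr hgen a
    exact this n a ha hn
  intro n
  induction n with
  | zero => exact fun a _ ha => mem_filtration_zero.mp ha ▸ J.zero_mem
  | succ n ih =>
    intro a haI haP
    obtain ⟨p, hp, r, rfl⟩ := mem_filtration_succ.mp haP
    have hrI : r ∈ leadingIdeal hl hr I n := ⟨_, haI, by simpa using hp⟩
    obtain ⟨g, hgJ, hgP⟩ := h n hrI
    have hlower : p + x ^ n * f r - g ∈ filtration f x n := by
      convert sub_mem hp hgP using 1
      abel
    simpa using J.add_mem (ih _ (sub_mem haI (hJI hgJ)) hlower) hgJ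

theorem exists_fg_le_and_leadingIdeal_le [IsNoetherianRing R] (I : Ideal A) (n : ℕ) :
    ∃ J ≤ I, J.FG ∧ leadingIdeal hl hr I n ≤ leadingIdeal hl hr J n := by
  obtain ⟨T, hT⟩ := IsNoetherian.noetherian (leadingIdeal hl hr I n)
  have hTI : ∀ r ∈ T, ∃ g ∈ I, g - x ^ n * f r ∈ filtration f x n :=
    fun r hr => hT.le (Submodule.subset_span hr)
  choose! g hgI hgP using hTI
  refine ⟨Ideal.span (g '' T), Ideal.span_le.mpr ?_, Submodule.fg_span (T.finite_toSet.image g),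
    hT.ge.trans <| Submodule.span_le.mpr fun r hr => ?_⟩
  · rintro _ ⟨r, hr, rfl⟩
    exact hgI r hr
  · exact ⟨g r, Ideal.subset_span ⟨r, hr, rfl⟩, hgP r hr⟩

end leadingIdeal

theorem isNoetherianRing [IsNoetherianRing R] (f : R →+* A) {x : A}
    (hl : ∀ r, ∃ r', x * f r = f r' * x) (hr : ∀ r, ∃ r', f r * x = x * f r')
    (hgen : Subring.closure (insert x (Set.range f)) = ⊤) : IsNoetherianRing A := by
  refine (isNoetherianRing_iff_ideal_fg A).mpr fun I => ?_
  obtain ⟨n₀, hn₀⟩ := monotone_stabilizes_iff_noetherian.mpr inferInstance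
    ⟨leadingIdeal hl hr I, leadingIdeal_mono_right I⟩
  choose J hJI hJfg hJ using exists_fg_le_and_leadingIdeal_le (hl := hl) (hr := hr) I
  set K := ⨆ n ∈ Finset.range (n₀ + 1), J n
  have hKI : K ≤ I := iSup₂_le fun n _ => hJI n
  have hK : ∀ n ≤ n₀, leadingIdeal hl hr I n ≤ leadingIdeal hl hr K n := fun n hn =>
    (hJ n).trans <| leadingIdeal_mono_left
      (le_biSup J (Finset.mem_range.mpr (Nat.lt_succ_of_le hn))) n
  have hleading : ∀ n, leadingIdeal hl hr I n ≤ leadingIdeal hl hr K n := by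
    intro n
    rcases le_total n n₀ with hn | hn
    · exact hK n hn
    · exact (hn₀ n hn).symm.le.trans ((hK n₀ le_rfl).trans (leadingIdeal_mono_right K hn))
  rw [(le_of_leadingIdeal_le hgen hKI hleading).antisymm hKI]
  exact Submodule.fg_biSup _ _ fun n _ => hJfg n

end NormalizingExtension

namespace Subring

variable {A : Type*} [Ring A]

/-- `y S = S y`. -/
def Normalizes (y : A) (S : Subring A) : Prop :=
  (∀ a ∈ S, ∃ b ∈ S, y * a = b * y) ∧ ∀ a ∈ S, ∃ b ∈ S, a * y = y * b

theorem normalizes_of_image_mul_eq {y : A} {S : Subring A}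
    (h : (fun b => y * b) '' (S : Set A) = (fun b => b * y) '' (S : Set A)) : Normalizes y S := by
  refine ⟨fun a ha => ?_, fun a ha => ?_⟩
  · obtain ⟨b, hb, e⟩ := h ▸ Set.mem_image_of_mem (fun b => y * b) ha
    exact ⟨b, hb, e.symm⟩
  · obtain ⟨b, hb, e⟩ := h.symm ▸ Set.mem_image_of_mem (fun b => b * y) ha
    exact ⟨b, hb, e.symm⟩

theorem normalizes_of_mem_center {y : A} (hy : y ∈ Set.center A) (S : Subring A) :
    Normalizes y S :=
  ⟨fun a ha => ⟨a, ha, (hy.comm a).eq⟩, fun a ha => ⟨a, ha, (hy.comm a).eq.symm⟩⟩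

theorem exists_mul_eq_mul_of_mem_closure {s : Set A} {T : Subring A} {y a : A}
    (h : ∀ a ∈ s, ∃ b ∈ T, y * a = b * y) (ha : a ∈ closure s) : ∃ b ∈ T, y * a = b * y := by
  induction ha using closure_induction with
  | mem a ha => exact h a ha
  | zero => exact ⟨0, zero_mem _, by rw [mul_zero, zero_mul]⟩
  | one => exact ⟨1, one_mem _, by rw [mul_one, one_mul]⟩
  | add a a' _ _ ih ih' =>
    obtain ⟨⟨b, hb, e⟩, ⟨b', hb', e'⟩⟩ := And.intro ih ih'
    exact ⟨b + b', add_mem hb hb', by rw [mul_add, add_mul, e, e']⟩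
  | neg a _ ih =>
    obtain ⟨b, hb, e⟩ := ih
    exact ⟨-b, neg_mem hb, by rw [mul_neg, neg_mul, e]⟩
  | mul a a' _ _ ih ih' =>
    obtain ⟨⟨b, hb, e⟩, ⟨b', hb', e'⟩⟩ := And.intro ih ih'
    exact ⟨b * b', mul_mem hb hb', by rw [← mul_assoc, e, mul_assoc, e', ← mul_assoc]⟩

open MulOpposite in
theorem normalizes_closure {s : Set A} {y : A}
    (hl : ∀ a ∈ s, ∃ b ∈ closure s, y * a = b * y) (hr : ∀ a ∈ s, ∃ b ∈ closure s, a * y = y * b) :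
    Normalizes y (closure s) := by
  refine ⟨fun a ha => exists_mul_eq_mul_of_mem_closure hl ha, fun a ha => ?_⟩
  have hr' : ∀ a ∈ unop ⁻¹' s, ∃ b ∈ (closure s).op, op y * a = b * op y := fun a ha => by
    obtain ⟨b, hb, e⟩ := hr a.unop ha
    exact ⟨op b, hb, by simpa using congrArg op e⟩
  obtain ⟨b, hb, e⟩ := exists_mul_eq_mul_of_mem_closure hr' (a := op a) (by rwa [← op_closure])
  exact ⟨b.unop, hb, by simpa using congrArg unop e⟩

theorem normalizes_closure_union {S : Subring A} {t : Set A} {y : A} (hy : Normalizes y S)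
    (ht : ∀ a ∈ t, ∃ u : Aˣ, (u : A) ∈ closure (S ∪ t) ∧ ((u⁻¹ : Aˣ) : A) ∈ closure (S ∪ t) ∧
      Commute (u : A) y ∧ a * y = u * (y * a)) :
    Normalizes y (closure (S ∪ t)) := by
  have hS : ∀ {a}, a ∈ S → a ∈ closure ((S : Set A) ∪ t) := fun ha => subset_closure (Or.inl ha)
  have ht' : ∀ {a}, a ∈ t → a ∈ closure ((S : Set A) ∪ t) := fun ha => subset_closure (Or.inr ha)
  refine normalizes_closure ?_ ?_
  · rintro a (ha | ha)
    · obtain ⟨b, hb, e⟩ := hy.1 a ha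
      exact ⟨b, hS hb, e⟩
    · obtain ⟨u, -, hu', -, e⟩ := ht a ha
      exact ⟨↑u⁻¹ * a, mul_mem hu' (ht' ha), by rw [mul_assoc, e, Units.inv_mul_cancel_left]⟩
  · rintro a (ha | ha)
    · obtain ⟨b, hb, e⟩ := hy.2 a ha
      exact ⟨b, hS hb, e⟩
    · obtain ⟨u, hu, -, hcomm, e⟩ := ht a ha
      exact ⟨u * a, mul_mem hu (ht' ha), by rw [e, ← mul_assoc, hcomm.eq, mul_assoc]⟩

theorem closure_insert_closure (y : A) (s : Set A) :
    closure (insert y (closure s : Set A)) = closure (insert y s) := by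
  rw [Set.insert_eq, Set.insert_eq, closure_union, closure_union, closure_eq]

theorem closure_closure_union (s t : Set A) :
    closure ((closure s : Set A) ∪ t) = closure (s ∪ t) := by
  rw [closure_union, closure_union, closure_eq]

theorem isNoetherianRing_closure_insert (S : Subring A) [IsNoetherianRing S] {y : A}
    (hy : Normalizes y S) :
    IsNoetherianRing (closure (insert y (S : Set A))) := by
  set T := closure (insert y (S : Set A))
  have hST : S ≤ T := fun a ha => subset_closure (Set.mem_insert_of_mem y ha)
  let Y : T := ⟨y, subset_closure (Set.mem_insert y _)⟩
  have himage : T.subtype '' insert Y (Set.range (inclusion hST)) = insert y (S : Set A) := by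
    rw [Set.image_insert_eq, ← Set.range_comp]
    congr 1
    ext a
    simp
  have hgen : closure (insert Y (Set.range (inclusion hST))) = ⊤ := by
    refine eq_top_iff.mpr fun a _ => ?_
    have ha : (a : A) ∈ (closure (insert Y (Set.range (inclusion hST)))).map T.subtype := by
      rw [RingHom.map_closure, himage]
      exact a.2
    obtain ⟨b, hb, hba⟩ := ha
    rwa [← Subtype.ext hba]
  refine NormalizingExtension.isNoetherianRing (inclusion hST) (x := Y) (fun r => ?_) (fun r => ?_)
    hgen
  · obtain ⟨b, hb, e⟩ := hy.1 r r.2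
    exact ⟨⟨b, hb⟩, Subtype.ext e⟩
  · obtain ⟨b, hb, e⟩ := hy.2 r r.2
    exact ⟨⟨b, hb⟩, Subtype.ext e⟩

theorem isNoetherianRing_closure_union_of_subset_center (S : Subring A) [IsNoetherianRing S]
    {s : Set A} (hs : s.Finite) (hc : s ⊆ Set.center A) :
    IsNoetherianRing (closure (S ∪ s)) := by
  induction s, hs using Set.Finite.induction_on with
  | empty => rwa [Set.union_empty, closure_eq]
  | @insert a s _ _ ih =>
    have := ih ((Set.subset_insert a s).trans hc)
    rw [Set.union_insert, ← closure_insert_closure]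
    exact isNoetherianRing_closure_insert _ (normalizes_of_mem_center (hc (Set.mem_insert a s)) _)

theorem isNoetherianRing_closure_union_range (S : Subring A) [IsNoetherianRing S] {m : ℕ}
    (x : Fin m → A) (hx : ∀ k, Normalizes (x k) (closure (S ∪ x '' Set.Iio k))) :
    IsNoetherianRing (closure (S ∪ Set.range x)) := by
  suffices ∀ k ≤ m, IsNoetherianRing (closure (S ∪ x '' {i | (i : ℕ) < k})) by
    have hall : {i : Fin m | (i : ℕ) < m} = Set.univ := Set.eq_univ_of_forall Fin.is_lt
    have hm := this m le_rfl
    rwa [hall, Set.image_univ] at hm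
  intro k
  induction k with
  | zero =>
    intro _
    have hnone : {i : Fin m | (i : ℕ) < 0} = ∅ :=
      Set.eq_empty_of_forall_notMem fun i => Nat.not_lt_zero i
    rwa [hnone, Set.image_empty, Set.union_empty, closure_eq]
  | succ k ih =>
    intro hk
    have hIio : {i : Fin m | (i : ℕ) < k} = Set.Iio ⟨k, hk⟩ := by
      ext i
      simp [Fin.lt_def]
    have hinsert : {i : Fin m | (i : ℕ) < k + 1} = insert ⟨k, hk⟩ (Set.Iio ⟨k, hk⟩) := by
      ext i
      simp only [Set.mem_ofPred_eq, Set.mem_insert_iff, Set.mem_Iio, Fin.ext_iff, Fin.lt_def]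
      omega
    have := ih (Nat.le_of_succ_le hk)
    rw [hIio] at this
    rw [hinsert, Set.image_insert_eq, Set.union_insert, ← closure_insert_closure]
    exact isNoetherianRing_closure_insert _ (hx _)

end Subring

open Subring in
/-- **Noncommutative Hilbert basis theorem for q-commutative extensions.**
Let `B` be a Noetherian subring of a ring `A`, and suppose `A` is generated over `B`
by elements `x 1, ..., x m` such that each `x i` normalises `B` (i.e. `x i * B = B * x i`
as sets) and for all `i ≤ j` there is a central unit `q i j` with
`x i * x j = q i j * (x j * x i)`.  Then `A` is Noetherian. -/
theorem q_commutative_noetherian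
    {A : Type*} [Ring A] (B : Subring A) (hB : IsNoetherianRing B)
    (m : ℕ) (x : Fin m → A)
    (hgen : Subring.closure ((B : Set A) ∪ Set.range x) = ⊤)
    (hnorm : ∀ i : Fin m, (fun b => x i * b) '' (B : Set A) = (fun b => b * x i) '' (B : Set A))
    (q : Fin m → Fin m → Aˣ)
    (hqcentral : ∀ i j : Fin m, (q i j : A) ∈ Set.center A)
    (hq : ∀ i j : Fin m, i ≤ j → x i * x j = (q i j : A) * (x j * x i)) :
    IsNoetherianRing A := by
  set Q : Set A := Set.range (fun p : Fin m × Fin m => (q p.1 p.2 : A)) ∪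
    Set.range (fun p : Fin m × Fin m => (((q p.1 p.2)⁻¹ : Aˣ) : A))
  have hQ : Q ⊆ Set.center A := Set.union_subset (Set.range_subset_iff.mpr fun p => hqcentral _ _)
    (Set.range_subset_iff.mpr fun p => Set.units_inv_mem_center (hqcentral _ _))
  have : IsNoetherianRing (closure (B ∪ Q)) := isNoetherianRing_closure_union_of_subset_center B
    ((Set.finite_range _).union (Set.finite_range _)) hQ
  have hx : ∀ k, Normalizes (x k) (closure (closure (B ∪ Q) ∪ x '' Set.Iio k)) := by
    intro k
    rw [closure_closure_union, Set.union_assoc]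
    refine normalizes_closure_union (normalizes_of_image_mul_eq (hnorm k)) ?_
    rintro a (ha | ⟨i, hi, rfl⟩)
    · exact ⟨1, one_mem _, by simp, Commute.one_left _,
        by rw [Units.val_one, one_mul, (hQ ha).comm]⟩
    · refine ⟨q i k, subset_closure (Or.inr (Or.inl (Or.inl ⟨(i, k), rfl⟩))),
        subset_closure (Or.inr (Or.inl (Or.inr ⟨(i, k), rfl⟩))),
        (hqcentral i k).comm (x k), hq i k (le_of_lt hi)⟩
  have htop : closure (closure (B ∪ Q) ∪ Set.range x) = ⊤ := by
    rw [closure_closure_union, eq_top_iff, ← hgen]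
    exact closure_mono (Set.union_subset_union_left _ Set.subset_union_left)
  have := isNoetherianRing_closure_union_range _ x hx
  rw [htop] at this
  exact isNoetherianRing_of_ringEquiv _ topEquiv
end

section
/- Let R be a commutative Noetherian ring with an element π, and let A be an R-algebra such that A/πA is Noetherian. Then the π-adic completion of A is Noetherian. -/
/-!
The completion `B` is an `R`-algebra isomorphic, as an `R`-module, to
`AdicCompletion (span {π}) A`; hence it is `π`-adically complete, and the kernel of `B → A/πA` is
`πB`. So it suffices that a `π`-adically complete ring `B` with `B/πB` left Noetherian is left
Noetherian. Given a left ideal `J`, the residues mod `π` of the `y` with `π ^ k • y ∈ J` form an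
increasing chain of left ideals of `B/πB`; it stabilises at some `N`, and lifting finitely many
generators of its first `N + 1` terms gives finitely many elements `π ^ k • y` of `J`. Every
element of `J ∩ πⁿB` agrees modulo `πⁿ⁺¹` with a combination of these whose coefficients lie in
`πⁿ⁻ᴺB`, so successive approximation converges and, by completeness, `J` is generated by them.
-/

variable {R : Type*} [CommRing R] {A : Type*} [Ring A] [Algebra R A]

/-- The ring congruence on `A` identifying elements that differ by a multiple of a
central element `z` (so the quotient is `A/zA`). -/
def modCon (z : A) (hz : ∀ a : A, a * z = z * a) : RingCon A where
  r a b := ∃ x : A, a - b = z * x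
  iseqv := by
    refine ⟨fun a => ⟨0, by simp⟩, ?_, ?_⟩
    · rintro a b ⟨x, hx⟩
      exact ⟨-x, by rw [mul_neg, ← hx]; abel⟩
    · rintro a b c ⟨x, hx⟩ ⟨y, hy⟩
      exact ⟨x + y, by rw [mul_add, ← hx, ← hy]; abel⟩
  add' := by
    rintro a b c d ⟨x, hx⟩ ⟨y, hy⟩
    exact ⟨x + y, by rw [mul_add, ← hx, ← hy]; abel⟩
  mul' := by
    rintro a b c d ⟨x, hx⟩ ⟨y, hy⟩
    refine ⟨x * c + b * y, ?_⟩
    have h1 : z * (x * c + b * y) = (a - b) * c + b * (c - d) := by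
      rw [mul_add, ← mul_assoc, ← hx, ← mul_assoc, ← hz b, mul_assoc, ← hy]
    rw [h1]; noncomm_ring

/-- The `π`-adic completion of the `R`-algebra `A`, realized as the inverse limit of the
quotient rings `A/πⁿA`: the subring of the product `Π n, A/πⁿA` consisting of the
coherent families. -/
def piAdicCompletion (π : R) :
    Subring (∀ n : ℕ,
      (modCon (algebraMap R A (π ^ n)) fun a => (Algebra.commutes (π ^ n) a).symm).Quotient) where
  carrier := {f | ∀ n : ℕ, ∃ a : A, ∀ m, m ≤ n → f m = (a : _)}
  one_mem' := fun n => ⟨1, fun m _ => rfl⟩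
  zero_mem' := fun n => ⟨0, fun m _ => rfl⟩
  mul_mem' := by
    intro f g hf hg n
    obtain ⟨a, ha⟩ := hf n
    obtain ⟨b, hb⟩ := hg n
    exact ⟨a * b, fun m hm => by rw [Pi.mul_apply, ha m hm, hb m hm]; rfl⟩
  add_mem' := by
    intro f g hf hg n
    obtain ⟨a, ha⟩ := hf n
    obtain ⟨b, hb⟩ := hg n
    exact ⟨a + b, fun m hm => by rw [Pi.add_apply, ha m hm, hb m hm]; rfl⟩
  neg_mem' := by
    intro f hf n
    obtain ⟨a, ha⟩ := hf n
    exact ⟨-a, fun m hm => by rw [Pi.neg_apply, ha m hm]; rfl⟩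

theorem mem_span_singleton_pow_smul_top {R M : Type*} [CommRing R] [AddCommGroup M] [Module R M]
    {π : R} {n : ℕ} {x : M} :
    x ∈ (Ideal.span {π} ^ n • ⊤ : Submodule R M) ↔ ∃ y, π ^ n • y = x := by
  rw [Ideal.span_singleton_pow, Submodule.ideal_span_singleton_smul,
    Submodule.mem_smul_pointwise_iff_exists]
  simp

section Approximation
variable {R B : Type*} [CommRing R] [Ring B] [Algebra R B] {I : Ideal R}

theorem mul_mem_smul_top {c : B} (hc : c ∈ (I • ⊤ : Submodule R B)) (g : B) :
    c * g ∈ (I • ⊤ : Submodule R B) := by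
  have := Submodule.mem_map_of_mem (f := LinearMap.mulRight R g) hc
  rw [Submodule.map_smul''] at this
  exact Submodule.smul_mono le_rfl le_top this

theorem Ideal.le_span_of_forall_exists_sub_sum_mem [IsAdicComplete I B] {J : Ideal B}
    {ι : Type*} {T : Finset ι} {g : ι → B} (hg : ∀ i ∈ T, g i ∈ J) (N : ℕ)
    -- for `n < N` the truncated `n - N = 0` leaves the coefficients unconstrained
    (happrox : ∀ n, ∀ x ∈ J, x ∈ (I ^ n • ⊤ : Submodule R B) → ∃ c : ι → B,
      (∀ i, c i ∈ (I ^ (n - N) • ⊤ : Submodule R B)) ∧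
        x - ∑ i ∈ T, c i * g i ∈ (I ^ (n + 1) • ⊤ : Submodule R B)) :
    J ≤ Ideal.span (g '' T) := by
  intro j hj
  have step (n : ℕ) (c : ι → B) : ∃ c' : ι → B,
      j - ∑ i ∈ T, c i * g i ∈ (I ^ n • ⊤ : Submodule R B) →
        (∀ i, c' i - c i ∈ (I ^ (n - N) • ⊤ : Submodule R B)) ∧
          j - ∑ i ∈ T, c' i * g i ∈ (I ^ (n + 1) • ⊤ : Submodule R B) := by
    by_cases h : j - ∑ i ∈ T, c i * g i ∈ (I ^ n • ⊤ : Submodule R B)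
    · have hJ : j - ∑ i ∈ T, c i * g i ∈ J :=
        J.sub_mem hj (J.sum_mem fun i hi => J.mul_mem_left _ (hg i hi))
      obtain ⟨d, hd, hx⟩ := happrox n _ hJ h
      refine ⟨c + d, fun _ => ⟨by simpa using hd, ?_⟩⟩
      simpa [add_mul, Finset.sum_add_distrib, sub_sub] using hx
    · exact ⟨c, fun h' => absurd h' h⟩
  choose! next hnext using step
  let C : ℕ → ι → B := fun n => Nat.rec 0 next n
  have hC (n : ℕ) : j - ∑ i ∈ T, C n i * g i ∈ (I ^ n • ⊤ : Submodule R B) := by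
    induction n with
    | zero => simp
    | succ n ih => exact (hnext n _ ih).2
  have hlim (i : ι) : ∃ U, ∀ n, C (n + N) i ≡ U [SMOD (I ^ n • ⊤ : Submodule R B)] := by
    refine IsPrecomplete.prec inferInstance fun hmn =>
      (AdicCompletion.isAdicCauchy_iff I B fun n => C (n + N) i).mpr (fun n => ?_) hmn
    have := (hnext (n + N) _ (hC (n + N))).1 i
    rw [Nat.add_sub_cancel, ← SModEq.sub_mem] at this
    rw [Nat.add_right_comm]
    exact this.symm
  choose U hU using hlim
  have hj_eq : j = ∑ i ∈ T, U i * g i := by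
    rw [← sub_eq_zero]
    refine IsHausdorff.haus (inferInstance : IsHausdorff I B) _ fun n => SModEq.sub_mem.mpr ?_
    have hdiff : ∑ i ∈ T, (C (n + N) i - U i) * g i ∈ (I ^ n • ⊤ : Submodule R B) :=
      Submodule.sum_mem _ fun i _ => mul_mem_smul_top (SModEq.sub_mem.mp (hU i n)) _
    have hrest := Submodule.pow_smul_top_le I B (Nat.le_add_right n N) (hC (n + N))
    convert add_mem hrest hdiff using 1
    simp [sub_mul, Finset.sum_sub_distrib]
  rw [hj_eq]
  exact Submodule.sum_mem _ fun i hi =>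
    Ideal.mul_mem_left _ _ (Ideal.subset_span (Set.mem_image_of_mem g hi))

end Approximation

section LeadingIdeal
variable {R B Q : Type*} [CommRing R] [Ring B] [Algebra R B] [Ring Q]

def leadingIdeal (φ : B →+* Q) (π : R) (J : Ideal B) (k : ℕ) : Ideal Q :=
  Ideal.map φ (Submodule.comap ((π ^ k) • LinearMap.id) J)

theorem leadingIdeal_mono (φ : B →+* Q) (π : R) (J : Ideal B) :
    Monotone (leadingIdeal φ π J) := by
  refine monotone_nat_of_le_succ fun k => Ideal.map_mono (f := φ) fun y hy => ?_
  simp only [Submodule.mem_comap, LinearMap.smul_apply, LinearMap.id_apply, pow_succ',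
    mul_smul] at hy ⊢
  exact J.smul_of_tower_mem π hy

variable {φ : B →+* Q} {π : R}

theorem exists_sub_sum_mem_pow_succ (hφ : Function.Surjective φ)
    (hker : ∀ b, φ b = 0 → ∃ c, π • c = b) {J : Ideal B} {N : ℕ} {s : ℕ → Finset B}
    (hs : ∀ n, leadingIdeal φ π J n ≤ Ideal.span (φ '' s (min n N))) {n : ℕ} {x : B}
    (hx : π ^ n • x ∈ J) :
    ∃ c : (Σ _ : ℕ, B) → B, (∀ t, c t ∈ (Ideal.span {π} ^ (n - N) • ⊤ : Submodule R B)) ∧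
      π ^ n • x - ∑ t ∈ (Finset.range (N + 1)).sigma s, c t * π ^ t.1 • t.2 ∈
        (Ideal.span {π} ^ (n + 1) • ⊤ : Submodule R B) := by
  set k := min n N
  have hφx : φ x ∈ Ideal.map φ (Ideal.span (s k)) := by
    rw [Ideal.map_span]
    exact hs n (Ideal.mem_map_of_mem φ (by simpa using hx : x ∈ Submodule.comap _ J))
  obtain ⟨z, hz, hφz⟩ := (Ideal.mem_map_iff_of_surjective φ hφ).mp hφx
  obtain ⟨f, -, rfl⟩ := Submodule.mem_span_finset.mp hz
  obtain ⟨w, hw⟩ := hker (x - ∑ a ∈ s k, f a • a) (by rw [map_sub, hφz, sub_self])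
  refine ⟨fun t => if t.1 = k then π ^ (n - k) • f t.2 else 0, fun t => ?_, ?_⟩
  · dsimp only
    split_ifs
    · exact Submodule.pow_smul_top_le _ _ (by omega)
        (mem_span_singleton_pow_smul_top.mpr ⟨_, rfl⟩)
    · exact zero_mem _
  · have hsum : ∑ t ∈ (Finset.range (N + 1)).sigma s,
        (if t.1 = k then π ^ (n - k) • f t.2 else 0) * π ^ t.1 • t.2 =
          π ^ n • ∑ a ∈ s k, f a • a := by
      rw [Finset.sum_sigma]
      simp only [ite_mul, zero_mul, Finset.sum_ite_irrel, Finset.sum_const_zero]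
      rw [Finset.sum_ite_eq', if_pos (Finset.mem_range.mpr (by omega)), Finset.smul_sum]
      refine Finset.sum_congr rfl fun a _ => ?_
      rw [smul_eq_mul, smul_mul_smul_comm, ← pow_add, Nat.sub_add_cancel (min_le_left n N)]
    rw [hsum, ← smul_sub, ← hw, smul_smul, ← pow_succ]
    exact mem_span_singleton_pow_smul_top.mpr ⟨w, rfl⟩

theorem IsNoetherianRing.of_isAdicComplete [IsAdicComplete (Ideal.span {π}) B]
    [IsNoetherianRing Q] (hφ : Function.Surjective φ) (hker : ∀ b, φ b = 0 → ∃ c, π • c = b) :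
    IsNoetherianRing B := by
  classical
  refine (isNoetherianRing_iff_ideal_fg B).mpr fun J => ?_
  obtain ⟨N, hN⟩ := monotone_stabilizes_iff_noetherian.mpr inferInstance
    ⟨leadingIdeal φ π J, leadingIdeal_mono φ π J⟩
  have hlift (k : ℕ) : ∃ s : Finset B,
      (↑s : Set B) ⊆ Submodule.comap ((π ^ k) • LinearMap.id) J ∧
        leadingIdeal φ π J k = Ideal.span (φ '' s) := by
    obtain ⟨s', hs', hspan⟩ := (Submodule.fg_span_iff_fg_span_finset_subset _).mp
      (IsNoetherian.noetherian (leadingIdeal φ π J k))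
    obtain ⟨s, hs, rfl⟩ := Finset.subset_set_image_iff.mp hs'
    exact ⟨s, hs, by rwa [Finset.coe_image] at hspan⟩
  choose s hsJ hspan using hlift
  have hs (n : ℕ) : leadingIdeal φ π J n ≤ Ideal.span (φ '' s (min n N)) := by
    rw [← hspan]
    rcases le_total n N with h | h
    · rw [min_eq_left h]
    · rw [min_eq_right h]
      exact (hN n h).ge
  have hgen : ∀ t ∈ (Finset.range (N + 1)).sigma s, π ^ t.1 • t.2 ∈ J := fun t ht =>
    hsJ t.1 (Finset.mem_sigma.mp ht).2
  refine ⟨((Finset.range (N + 1)).sigma s).image fun t => π ^ t.1 • t.2, le_antisymm ?_ ?_⟩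
  · rw [Finset.coe_image, Ideal.span_le]
    rintro _ ⟨t, ht, rfl⟩
    exact hgen t ht
  · rw [Finset.coe_image]
    refine Ideal.le_span_of_forall_exists_sub_sum_mem (I := Ideal.span {π}) hgen N
      fun n x _ hxn => ?_
    obtain ⟨y, rfl⟩ := mem_span_singleton_pow_smul_top.mp hxn
    exact exists_sub_sum_mem_pow_succ hφ hker hs ‹_›

end LeadingIdeal

theorem IsAdicComplete.of_linearEquiv {R M N : Type*} [CommRing R] [AddCommGroup M] [Module R M]
    [AddCommGroup N] [Module R N] {I : Ideal R} [IsAdicComplete I N] (e : M ≃ₗ[R] N) :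
    IsAdicComplete I M := by
  rw [← AdicCompletion.of_bijective_iff]
  have : ⇑(AdicCompletion.of I M) =
      (AdicCompletion.congr I e).symm ∘ AdicCompletion.of I N ∘ e := by
    funext x
    simp [AdicCompletion.congr_symm_apply, AdicCompletion.map_of]
  rw [this]
  exact (AdicCompletion.congr I e).symm.bijective.comp
    ((AdicCompletion.of_bijective I N).comp e.bijective)

section PiAdicCompletion
variable (π : R)

theorem modCon_pow_coe_eq_zero_iff {n : ℕ} {a : A} :
    (a : (modCon (algebraMap R A (π ^ n)) fun b => (Algebra.commutes (π ^ n) b).symm).Quotient) =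
      0 ↔ a ∈ (Ideal.span {π} ^ n • ⊤ : Submodule R A) := by
  rw [← RingCon.coe_zero, RingCon.eq, mem_span_singleton_pow_smul_top]
  simp [modCon, Algebra.smul_def, eq_comm]

noncomputable def modConPowEquiv (n : ℕ) :
    (A ⧸ (Ideal.span {π} ^ n • ⊤ : Submodule R A)) ≃ₗ[R]
      (modCon (algebraMap R A (π ^ n)) fun b => (Algebra.commutes (π ^ n) b).symm).Quotient :=
  LinearEquiv.ofBijective
    (Submodule.liftQ _ (RingCon.mkₐ R _).toLinearMap fun _ ha =>
      LinearMap.mem_ker.mpr ((modCon_pow_coe_eq_zero_iff π).mpr ha))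
    ⟨LinearMap.ker_eq_bot.mp (Submodule.ker_liftQ_eq_bot _ _ _ fun _ ha =>
      (modCon_pow_coe_eq_zero_iff π).mp (LinearMap.mem_ker.mp ha)),
     fun q => by
      obtain ⟨a, rfl⟩ := RingCon.mkₐ_surjective (α := R) _ q
      exact ⟨Submodule.Quotient.mk a, rfl⟩⟩

theorem modConPowEquiv_mk (n : ℕ) (a : A) :
    modConPowEquiv π n (Submodule.Quotient.mk a) = a := rfl

def piAdicCompletion.toSubalgebra :
    Subalgebra R (∀ n : ℕ,
      (modCon (algebraMap R A (π ^ n)) fun a => (Algebra.commutes (π ^ n) a).symm).Quotient) :=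
  { piAdicCompletion π with algebraMap_mem' := fun r _ => ⟨algebraMap R A r, fun _ _ => rfl⟩ }

instance : Algebra R (piAdicCompletion (A := A) π) :=
  inferInstanceAs (Algebra R (piAdicCompletion.toSubalgebra (A := A) π))

noncomputable def piAdicCompletionEquiv :
    piAdicCompletion (A := A) π ≃ₗ[R] AdicCompletion (Ideal.span {π}) A where
  toFun f := ⟨fun n => (modConPowEquiv π n).symm (f.1 n), fun {m n} hmn => by
    obtain ⟨a, ha⟩ := f.2 n
    dsimp only
    rw [ha n le_rfl, ha m hmn, ← modConPowEquiv_mk, ← modConPowEquiv_mk,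
      LinearEquiv.symm_apply_apply, LinearEquiv.symm_apply_apply]
    rfl⟩
  invFun x := ⟨fun n => modConPowEquiv π n (x.val n), fun n => by
    obtain ⟨a, ha⟩ := Submodule.mkQ_surjective _ (x.val n)
    refine ⟨a, fun m hm => ?_⟩
    show modConPowEquiv π m (x.val m) = a
    rw [← x.property hm, ← ha]
    rfl⟩
  map_add' f g := AdicCompletion.ext fun n => map_add _ _ _
  map_smul' r f := AdicCompletion.ext fun n => map_smul (modConPowEquiv π n).symm r (f.1 n)
  left_inv f := Subtype.ext (funext fun n => LinearEquiv.apply_symm_apply _ _)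
  right_inv x := AdicCompletion.ext fun n => LinearEquiv.symm_apply_apply _ _

instance : IsAdicComplete (Ideal.span {π}) (piAdicCompletion (A := A) π) :=
  have := AdicCompletion.isAdicComplete (M := A) (Submodule.fg_span_singleton π)
  .of_linearEquiv (piAdicCompletionEquiv π)

def piAdicCompletion.eval (n : ℕ) : piAdicCompletion (A := A) π →+*
    (modCon (algebraMap R A (π ^ n)) fun a => (Algebra.commutes (π ^ n) a).symm).Quotient :=
  (Pi.evalRingHom _ n).comp (piAdicCompletion π).subtype

theorem piAdicCompletion.eval_surjective (n : ℕ) :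
    Function.Surjective (piAdicCompletion.eval (A := A) π n) := by
  intro q
  obtain ⟨a, rfl⟩ := RingCon.mk'_surjective _ q
  exact ⟨⟨fun _ => a, fun _ => ⟨a, fun _ _ => rfl⟩⟩, rfl⟩

theorem piAdicCompletion.exists_pow_smul_eq_of_eval_eq_zero {n : ℕ}
    {f : piAdicCompletion (A := A) π} (hf : piAdicCompletion.eval π n f = 0) :
    ∃ g, π ^ n • g = f := by
  have hmem : piAdicCompletionEquiv π f ∈ (Ideal.span {π} ^ n • ⊤ : Submodule R _) := by
    rw [AdicCompletion.pow_smul_top_eq_ker_eval (Submodule.fg_span_singleton π),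
      LinearMap.mem_ker]
    exact (map_eq_zero_iff _ (modConPowEquiv π n).symm.injective).mpr hf
  obtain ⟨y, hy⟩ := mem_span_singleton_pow_smul_top.mp hmem
  refine ⟨(piAdicCompletionEquiv π).symm y, ?_⟩
  rw [← map_smul, hy, LinearEquiv.symm_apply_apply]

end PiAdicCompletion

theorem adic_completion_noetherian_general (π : R)
    (hmod : IsNoetherianRing
      (modCon (algebraMap R A π) fun a => (Algebra.commutes π a).symm).Quotient) :
    IsNoetherianRing (piAdicCompletion (A := A) π) := by
  have : IsNoetherianRing
      (modCon (algebraMap R A (π ^ 1)) fun a => (Algebra.commutes (π ^ 1) a).symm).Quotient :=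
    isNoetherianRing_of_ringEquiv _ <|
      RingCon.congr (c := modCon (algebraMap R A π) _) (RingEquiv.refl A) <| by
        simp only [pow_one]
        rfl
  refine IsNoetherianRing.of_isAdicComplete (π := π) (piAdicCompletion.eval_surjective π 1)
    fun f hf => ?_
  simpa using piAdicCompletion.exists_pow_smul_eq_of_eval_eq_zero π hf

/-- **Berthelot's Lemma 3.2.2.**  Let `R` be a commutative Noetherian ring with an element
`π`, and let `A` be an `R`-algebra such that `A/πA` is Noetherian.  Then the `π`-adic
completion `lim_n A/πⁿA` of `A` is Noetherian. -/
theorem adic_completion_noetherian [IsNoetherianRing R] (π : R)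
    (hmod : IsNoetherianRing
      (modCon (algebraMap R A π) fun a => (Algebra.commutes π a).symm).Quotient) :
    IsNoetherianRing (piAdicCompletion (A := A) π) :=
  adic_completion_noetherian_general π hmod
end

section
/- Let R be a discrete valuation ring with uniformizer π and let 𝓡 = ⊕_{m ∈ ℤ^n} 𝓡_m be a ℤ^n-graded R-algebra such that each graded piece 𝓡_m is a finitely generated R-module. If 𝓡/π𝓡 is Noetherian, then 𝓡 satisfies the ascending chain condition on graded ideals. -/
/-!
Write `(J : π^j) = {a | π^j • a ∈ J}`. If `J ≤ I` are left ideals with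
`(I : π^j) ≤ (J : π^j) + πA` for every `j`, peeling off one factor of `π` at a time gives
`I ≤ J + π^k A` for every `k`. When `J` is graded this forces `I ≤ J`: each homogeneous
component of an element of `I` lies in `(J ∩ A_m) + π^k A_m` for all `k`, and Krull's
intersection theorem in the finitely generated `R`-module `A_m / (J ∩ A_m)` kills it.

Now let `I` be the union of an ascending chain `c` of graded left ideals. ACC modulo `π` makes
`j ↦ (I : π^j) + πA` constant from some `j₀` on, and the criterion above, applied to
`(I : π^j₀) ≤ (I : π^j)`, shows `(I : π^j) = (I : π^j₀)` for `j ≥ j₀`. ACC modulo `π` for the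
finitely many chains `k ↦ (c k : π^j) + πA`, `j ≤ j₀`, yields one `N` with
`(I : π^j) ≤ (c N : π^j) + πA` for all `j`, and the criterion gives `I = c N`.
-/

open DirectSum

theorem exists_forall_le_of_forall_stabilizes {α : Type*} [Preorder α] (f : ℕ → ℕ →o α)
    (n : ℕ) (h : ∀ j, ∃ N, ∀ k, N ≤ k → f j k = f j N) :
    ∃ N, ∀ j ≤ n, ∀ k, f j k ≤ f j N := by
  choose Nf hNf using h
  refine ⟨(Finset.range (n + 1)).sup Nf, fun j hj k => ?_⟩
  have hjN : Nf j ≤ (Finset.range (n + 1)).sup Nf :=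
    Finset.le_sup (Finset.mem_range.mpr (Nat.lt_succ_of_le hj))
  calc f j k ≤ f j (max k ((Finset.range (n + 1)).sup Nf)) := (f j).mono (le_max_left _ _)
    _ = f j (Nf j) := hNf j _ (hjN.trans (le_max_right _ _))
    _ = f j ((Finset.range (n + 1)).sup Nf) := (hNf j _ hjN).symm

theorem Submodule.mem_of_forall_sub_pow_smul_mem {R E : Type*} [CommRing R]
    [IsNoetherianRing R] [IsLocalRing R] [AddCommGroup E] [Module R E] {π : R}
    (hπ : ¬IsUnit π) {M N : Submodule R E} (hM : M.FG) {x : E} (hx : x ∈ M)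
    (h : ∀ k : ℕ, ∃ y ∈ M, x - π ^ k • y ∈ N) : x ∈ N := by
  have : Module.Finite R M := Module.Finite.iff_fg.mpr hM
  set N' := N.comap M.subtype
  have hspan : Ideal.span {π} ≠ ⊤ := by rwa [Ne, Ideal.span_singleton_eq_top]
  have hmem : N'.mkQ ⟨x, hx⟩ ∈ ⨅ k : ℕ, Ideal.span {π} ^ k • (⊤ : Submodule R (M ⧸ N')) := by
    refine Submodule.mem_iInf _ |>.mpr fun k => ?_
    obtain ⟨y, hyM, hy⟩ := h k
    have hxy : N'.mkQ ⟨x, hx⟩ = π ^ k • N'.mkQ ⟨y, hyM⟩ := by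
      rw [← map_smul, ← sub_eq_zero, ← map_sub, Submodule.mkQ_apply,
        Submodule.Quotient.mk_eq_zero]
      exact hy
    rw [hxy]
    exact Submodule.smul_mem_smul (Ideal.pow_mem_pow (Ideal.mem_span_singleton_self π) k) trivial
  rwa [Ideal.iInf_pow_smul_eq_bot_of_isLocalRing _ hspan, Submodule.mem_bot,
    Submodule.mkQ_apply, Submodule.Quotient.mk_eq_zero] at hmem

section Colon

variable {R A : Type*} [CommRing R] [Ring A] [Algebra R A]

/-- The left ideal `(J : r) = {a | r • a ∈ J}`. -/
def Ideal.smulColon (J : Ideal A) (r : R) : Ideal A :=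
  Submodule.comap (r • LinearMap.id : A →ₗ[A] A) J

namespace Ideal

@[simp]
theorem mem_smulColon {J : Ideal A} {r : R} {a : A} : a ∈ J.smulColon r ↔ r • a ∈ J :=
  Iff.rfl

@[simp]
theorem smulColon_one (J : Ideal A) : J.smulColon (1 : R) = J := by
  ext a
  simp

theorem smulColon_smulColon (J : Ideal A) (r s : R) :
    (J.smulColon r).smulColon s = J.smulColon (r * s) := by
  ext a
  simp [mul_smul]

theorem smulColon_mono {J J' : Ideal A} (h : J ≤ J') (r : R) :
    J.smulColon r ≤ J'.smulColon r :=
  fun _ ha => h ha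

theorem smulColon_pow_mono (J : Ideal A) (r : R) {i j : ℕ} (h : i ≤ j) :
    J.smulColon (r ^ i) ≤ J.smulColon (r ^ j) := by
  obtain ⟨d, rfl⟩ := Nat.exists_eq_add_of_le h
  intro a ha
  rw [mem_smulColon, pow_add, mul_comm, mul_smul]
  exact J.smul_of_tower_mem _ ha

theorem iSup_smulColon (c : ℕ →o Ideal A) (r : R) :
    (⨆ k, c k).smulColon r = ⨆ k, (c k).smulColon r := by
  have hdir : Directed (· ≤ ·) fun k => (c k).smulColon r :=
    (Monotone.directed_le fun _ _ h => smulColon_mono (c.mono h) r)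
  ext a
  rw [mem_smulColon, Submodule.mem_iSup_of_chain, Submodule.mem_iSup_of_directed _ hdir]
  rfl

theorem mem_sup_span_algebraMap {J : Ideal A} {r : R} {a : A} :
    a ∈ J ⊔ span {algebraMap R A r} ↔ ∃ x ∈ J, ∃ y : A, x + r • y = a := by
  have hmul : ∀ y : A, y * algebraMap R A r = r • y := fun y => by
    rw [Algebra.smul_def, Algebra.commutes]
  simp only [Submodule.mem_sup, mem_span_singleton', hmul]
  constructor
  · rintro ⟨x, hx, _, ⟨y, rfl⟩, rfl⟩
    exact ⟨x, hx, y, rfl⟩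
  · rintro ⟨x, hx, y, rfl⟩
    exact ⟨x, hx, _, ⟨y, rfl⟩, rfl⟩

theorem smulColon_pow_le_sup_span_pow {π : R} {I J : Ideal A} (hJI : J ≤ I)
    (h : ∀ j, I.smulColon (π ^ j) ≤ J.smulColon (π ^ j) ⊔ span {algebraMap R A π}) (k : ℕ) :
    ∀ j, I.smulColon (π ^ j) ≤ J.smulColon (π ^ j) ⊔ span {algebraMap R A (π ^ k)} := by
  induction k with
  | zero => simp
  | succ k ih =>
    intro j a ha
    obtain ⟨x, hx, w, rfl⟩ := mem_sup_span_algebraMap.mp (h j ha)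
    have hw : w ∈ I.smulColon (π ^ (j + 1)) := by
      have hπw := sub_mem ha (smulColon_mono hJI _ hx)
      rw [add_sub_cancel_left, mem_smulColon, ← mul_smul, ← pow_succ] at hπw
      exact hπw
    obtain ⟨x', hx', y, rfl⟩ := mem_sup_span_algebraMap.mp (ih (j + 1) hw)
    have hπx' : π • x' ∈ J.smulColon (π ^ j) := by
      rw [mem_smulColon, ← mul_smul, ← pow_succ]
      exact hx'
    refine mem_sup_span_algebraMap.mpr ⟨x + π • x', add_mem hx hπx', y, ?_⟩
    rw [smul_add, pow_succ', mul_smul, add_assoc]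

end Ideal

end Colon

namespace Ideal.IsHomogeneous

variable {R A ι : Type*} [CommRing R] [Ring A] [Algebra R A]
  [DecidableEq ι] [AddMonoid ι] {𝒜 : ι → Submodule R A} [GradedRing 𝒜]

theorem smulColon {J : Ideal A} (hJ : J.IsHomogeneous 𝒜) (r : R) :
    (J.smulColon r).IsHomogeneous 𝒜 := by
  intro i a ha
  simpa [decompose_smul, DirectSum.smul_apply, Submodule.coe_smul] using hJ i ha

variable [IsNoetherianRing R] [IsLocalRing R] (hfg : ∀ i, (𝒜 i).FG) {π : R} (hπ : ¬IsUnit π)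
include hfg hπ

theorem mem_of_forall_mem_sup_span_pow {J : Ideal A} (hJ : J.IsHomogeneous 𝒜) {a : A}
    (h : ∀ k : ℕ, a ∈ J ⊔ span {algebraMap R A (π ^ k)}) : a ∈ J := by
  refine (hJ.mem_iff 𝒜).mpr fun i => ?_
  refine Submodule.mem_of_forall_sub_pow_smul_mem (N := J.restrictScalars R) hπ (hfg i)
    (SetLike.coe_mem _) fun k => ?_
  obtain ⟨x, hx, y, rfl⟩ := mem_sup_span_algebraMap.mp (h k)
  refine ⟨decompose 𝒜 y i, SetLike.coe_mem _, ?_⟩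
  simpa [decompose_add, decompose_smul, DirectSum.smul_apply, Submodule.coe_smul] using hJ i hx

theorem le_of_smulColon_pow_le_sup {I J : Ideal A} (hJ : J.IsHomogeneous 𝒜) (hJI : J ≤ I)
    (h : ∀ j, I.smulColon (π ^ j) ≤ J.smulColon (π ^ j) ⊔ span {algebraMap R A π}) :
    I ≤ J := fun a ha =>
  hJ.mem_of_forall_mem_sup_span_pow hfg hπ fun k => by
    simpa using smulColon_pow_le_sup_span_pow hJI h k 0 (by simpa using ha)

theorem smulColon_pow_le_of_stable {I : Ideal A} (hI : I.IsHomogeneous 𝒜) {j₀ : ℕ}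
    (hstab : ∀ j, j₀ ≤ j → I.smulColon (π ^ j) ⊔ span {algebraMap R A π} =
      I.smulColon (π ^ j₀) ⊔ span {algebraMap R A π})
    {j : ℕ} (hj : j₀ ≤ j) : I.smulColon (π ^ j) ≤ I.smulColon (π ^ j₀) := by
  refine (hI.smulColon _).le_of_smulColon_pow_le_sup hfg hπ (I.smulColon_pow_mono π hj)
    fun i => ?_
  rw [smulColon_smulColon, smulColon_smulColon, ← pow_add, ← pow_add]
  calc I.smulColon (π ^ (j + i))
      ≤ I.smulColon (π ^ (j + i)) ⊔ span {algebraMap R A π} := le_sup_left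
    _ = I.smulColon (π ^ j₀) ⊔ span {algebraMap R A π} := hstab _ (by omega)
    _ = I.smulColon (π ^ (j₀ + i)) ⊔ span {algebraMap R A π} := (hstab _ (by omega)).symm

end Ideal.IsHomogeneous

/-- **Graded Noetherianity from the reduction mod `π`.**  Let `R` be a DVR with
uniformizer `π` and let `𝒜` be a `ℤⁿ`-grading of an `R`-algebra `A` whose graded pieces
are finitely generated `R`-modules.  If `A/πA` is Noetherian (equivalently, the left
ideals of `A` containing `πA` satisfy the ascending chain condition), then `A` is graded
Noetherian, i.e. ascending chains of graded (homogeneous) left ideals of `A` stabilize. -/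
theorem graded_noetherian_of_mod_pi_noetherian
    (R : Type*) [CommRing R] [IsDomain R] [IsDiscreteValuationRing R]
    (π : R) (hπ : Irreducible π)
    (A : Type*) [Ring A] [Algebra R A]
    (n : ℕ) (𝒜 : (Fin n → ℤ) → Submodule R A) [GradedRing 𝒜]
    (hfg : ∀ m : Fin n → ℤ, (𝒜 m).FG)
    (hmod : ∀ c : ℕ →o Ideal A, (∀ k, Ideal.span {algebraMap R A π} ≤ c k) →
      ∃ N, ∀ k, N ≤ k → c k = c N) :
    ∀ c : ℕ →o Ideal A,
      (∀ k, ∀ a ∈ c k, ∀ m : Fin n → ℤ, (DirectSum.decompose 𝒜 a m : A) ∈ c k) →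
      ∃ N, ∀ k, N ≤ k → c k = c N := by
  intro c hc
  set P := Ideal.span {algebraMap R A π}
  have hck : ∀ k, (c k).IsHomogeneous 𝒜 := fun k i a ha => hc k a ha i
  set I := ⨆ k, c k
  obtain ⟨j₀, hj₀⟩ := hmod ⟨fun j => I.smulColon (π ^ j) ⊔ P,
    fun _ _ h => sup_le_sup_right (I.smulColon_pow_mono π h) P⟩ fun _ => le_sup_right
  obtain ⟨N, hN⟩ := exists_forall_le_of_forall_stabilizes
    (fun j => ⟨fun k => (c k).smulColon (π ^ j) ⊔ P,
      fun _ _ h => sup_le_sup_right (Ideal.smulColon_mono (c.mono h) _) P⟩)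
    j₀ fun j => hmod _ fun _ => le_sup_right
  have hIN : ∀ j ≤ j₀, I.smulColon (π ^ j) ≤ (c N).smulColon (π ^ j) ⊔ P := fun j hj => by
    rw [Ideal.iSup_smulColon]
    exact iSup_le fun k => le_sup_left.trans (hN j hj k)
  have hcolon : ∀ j, I.smulColon (π ^ j) ≤ (c N).smulColon (π ^ j) ⊔ P := by
    intro j
    rcases le_total j j₀ with hj | hj
    · exact hIN j hj
    · calc I.smulColon (π ^ j)
          ≤ I.smulColon (π ^ j₀) :=
            (Ideal.IsHomogeneous.iSup hck).smulColon_pow_le_of_stable hfg hπ.not_isUnit hj₀ hj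
        _ ≤ (c N).smulColon (π ^ j₀) ⊔ P := hIN j₀ le_rfl
        _ ≤ (c N).smulColon (π ^ j) ⊔ P := sup_le_sup_right ((c N).smulColon_pow_mono π hj) P
  have hIcN : I ≤ c N :=
    (hck N).le_of_smulColon_pow_le_sup hfg hπ.not_isUnit (le_iSup (fun k => c k) N) hcolon
  exact ⟨N, fun k hk => le_antisymm ((le_iSup (fun k => c k) k).trans hIcN) (c.mono hk)⟩
end

section
/- Let U be the De Concini–Kac integral form of U_q over the DVR R and U^res Lusztig's integral form. Then U^fin := {u ∈ U : ad(U^res)(u) is finitely generated over R} equals U_q^fin ∩ U, and also equals {u ∈ U : ad(U)(u) is finitely generated over R}. -/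
/-!
For `u ∈ U` write `f = ad · u`, an `L`-linear map. Since `U` spans `Uq` over `L`, for every
`R`-form `S` with `U ≤ S` the `L`-span of `span R (f '' S)` is the whole image of `f`. So if
`span R (f '' S)` is finitely generated, `f` has finite rank; conversely, if `S ≤ Ures` then
`span R (f '' S)` lies in `U ⊆ Ures` and spans a finite-dimensional `L`-space, hence is finitely
generated by the key input. Both descriptions of `U^fin` are thus "`f` has finite rank".
-/

open Submodule

section Lattice

variable {R L M N : Type*} [CommRing R] [Field L] [Algebra R L]
  [AddCommGroup M] [Module L M] [AddCommGroup N] [Module L N] [Module R N] [IsScalarTower R L N]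

theorem Submodule.FG.finiteDimensional_span {P : Submodule R N} (hP : P.FG) :
    FiniteDimensional L (span L (P : Set N)) :=
  Module.Finite.iff_fg.mpr hP.span

theorem LinearMap.span_span_image_eq_range (f : M →ₗ[L] N) {s : Set M} (hs : span L s = ⊤) :
    span L (span R (f '' s) : Set N) = LinearMap.range f := by
  rw [span_span_of_tower, span_image, hs, LinearMap.range_eq_map]

end Lattice

/-- **The integral finite part.**  Let `U ⊆ Ures ⊆ Uq` be the De Concini–Kac and Lusztig
integral forms (`R`-subalgebras of `Uq`, both `L`-lattices) of the quantized enveloping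
algebra `Uq` over `L = Frac R`, with adjoint action `ad`, such that the adjoint action
of `Ures` preserves `U`, and such that (key input) every `R`-submodule of `Uq` contained
in `Ures` whose `L`-span is finite dimensional is finitely generated.  Then
`U^fin := {u ∈ U : ad(Ures)(u) is f.g. over R}` equals `U_q^fin ∩ U`
(where `U_q^fin = {u : ad(Uq)(u) is finite dimensional}`) and also equals
`{u ∈ U : ad(U)(u) is f.g. over R}`. -/
theorem integral_finite_part_eq
    (R L : Type*) [CommRing R] [Field L] [Algebra R L]
    (Uq : Type*) [Ring Uq] [Algebra L Uq] [Algebra R Uq] [IsScalarTower R L Uq]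
    (ad : Uq →ₗ[L] Uq →ₗ[L] Uq)
    (U Ures : Subalgebra R Uq)
    (hsub : U ≤ Ures)
    (hlatU : Submodule.span L (U : Set Uq) = ⊤)
    (hstab : ∀ x ∈ Ures, ∀ u ∈ U, ad x u ∈ U)
    (hkey : ∀ N : Submodule R Uq, (N : Set Uq) ⊆ (Ures : Set Uq) →
      FiniteDimensional L (Submodule.span L (N : Set Uq)) → N.FG) :
    ({u : Uq | u ∈ U ∧ (Submodule.span R ((fun x => ad x u) '' (Ures : Set Uq))).FG}
        = {u : Uq | u ∈ U ∧
            FiniteDimensional L (Submodule.span L (Set.range fun x : Uq => ad x u))}) ∧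
    ({u : Uq | u ∈ U ∧ (Submodule.span R ((fun x => ad x u) '' (Ures : Set Uq))).FG}
        = {u : Uq | u ∈ U ∧ (Submodule.span R ((fun x => ad x u) '' (U : Set Uq))).FG}) := by
  have fg_iff : ∀ u ∈ U, ∀ S : Subalgebra R Uq, U ≤ S → S ≤ Ures →
      ((span R ((fun x => ad x u) '' (S : Set Uq))).FG ↔
        FiniteDimensional L (span L (Set.range fun x : Uq => ad x u))) := by
    intro u hu S hUS hSres
    have hS : span L (S : Set Uq) = ⊤ := top_le_iff.mp (hlatU ▸ span_mono hUS)
    have hsubset : (span R ((fun x => ad x u) '' (S : Set Uq)) : Set Uq) ⊆ Ures :=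
      span_le (p := Subalgebra.toSubmodule Ures) |>.mpr <| Set.image_subset_iff.mpr
        fun x hx => hsub (hstab x (hSres hx) u hu)
    have hspan : span L (span R ((fun x => ad x u) '' (S : Set Uq)) : Set Uq) =
        span L (Set.range fun x : Uq => ad x u) :=
      ((ad.flip u).span_span_image_eq_range hS).trans (span_eq _).symm
    rw [← hspan]
    exact ⟨Submodule.FG.finiteDimensional_span, hkey _ hsubset⟩
  constructor <;> ext u <;> refine and_congr_right fun hu => ?_
  · exact fg_iff u hu Ures hsub le_rfl
  · exact (fg_iff u hu Ures hsub le_rfl).trans (fg_iff u hu U le_rfl hsub).symm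
end

section
/- Let C be a functor from ℕ (with n+1 → n transition maps) to cochain complexes of R-modules such that each complex C_n is exact and each transition map C_{n+1} → C_n is degreewise surjective. Then the inverse limit complex lim_n C_n is exact. -/
variable {R : Type*} [CommRing R]
variable (M : ℕ → ℤ → Type*) [∀ n i, AddCommGroup (M n i)] [∀ n i, Module R (M n i)]
variable (d : ∀ n i, M n i →ₗ[R] M n (i + 1))
variable (t : ∀ n i, M (n + 1) i →ₗ[R] M n i)

/-- The degree-`i` piece of the inverse limit of the complexes: compatible families. -/
def limitPiece (i : ℤ) : Submodule R (∀ n, M n i) where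
  carrier := {f | ∀ n, t n i (f (n + 1)) = f n}
  add_mem' := fun hf hg n => by simp only [Pi.add_apply, map_add, hf n, hg n]
  zero_mem' := fun n => by simp
  smul_mem' := fun r f hf n => by simp only [Pi.smul_apply, map_smul, hf n]

/-- The differential of the inverse limit complex, acting componentwise. -/
def limitD (hcomm : ∀ n i x, d n i (t n i x) = t n (i + 1) (d (n + 1) i x)) (i : ℤ) :
    limitPiece M t i →ₗ[R] limitPiece M t (i + 1) :=
  LinearMap.codRestrict _
    ((LinearMap.pi fun n => (d n i).comp (LinearMap.proj n)).comp (limitPiece M t i).subtype)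
    (fun cc => fun n => by
      simp only [LinearMap.comp_apply, LinearMap.pi_apply, LinearMap.proj_apply,
        Submodule.coe_subtype]
      rw [← hcomm, cc.2 n])

/-- **Exactness of an inverse limit of exact complexes with surjective transition maps**
(the Mittag-Leffler argument, EGA III 0.13.2.3):  if each cochain complex `C_n = (M n, d n)`
is exact and each transition chain map `t n : C_{n+1} → C_n` is degreewise surjective,
then the inverse limit complex is exact. -/
theorem limit_of_exact_complexes_exact
    (hcomm : ∀ n i x, d n i (t n i x) = t n (i + 1) (d (n + 1) i x))
    (hsurj : ∀ n i, Function.Surjective (t n i))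
    (hexact : ∀ n i, LinearMap.range (d n i) = LinearMap.ker (d n (i + 1))) :
    ∀ i : ℤ, LinearMap.range (limitD M d t hcomm i)
      = LinearMap.ker (limitD M d t hcomm (i + 1)) := by
  intro i
  obtain ⟨j, rfl⟩ : ∃ j, j + 1 = i := ⟨i - 1, by ring⟩
  have dd : ∀ (n : ℕ) (x : M n (j + 1)),
      d n (j + 1) x = 0 ↔ x ∈ LinearMap.range (d n j) := by
    intro n x
    rw [hexact n j, LinearMap.mem_ker]
  ext f
  simp only [LinearMap.mem_range, LinearMap.mem_ker]
  constructor
  · rintro ⟨x, rfl⟩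
    apply Subtype.ext
    funext n
    show d n (j + 1 + 1) (d n (j + 1) ((x : ∀ m, M m (j + 1)) n)) = 0
    have : d n (j + 1) ((x : ∀ m, M m (j + 1)) n) ∈ LinearMap.ker (d n (j + 1 + 1)) := by
      rw [← hexact]
      exact ⟨_, rfl⟩
    exact this
  · intro hf
    have hf' : ∀ n, d n (j + 1 + 1) ((f : ∀ m, M m (j + 1 + 1)) n) = 0 := fun n =>
      congrFun (congrArg Subtype.val hf) n
    -- every component of f has a preimage under d
    have hmem : ∀ n, (f : ∀ m, M m (j + 1 + 1)) n ∈ LinearMap.range (d n (j + 1)) := by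
      intro n
      rw [hexact n (j + 1), LinearMap.mem_ker]
      exact hf' n
    -- inductive lifting step
    have step : ∀ (n : ℕ) (x : M n (j + 1)), d n (j + 1) x = (f : ∀ m, M m (j + 1 + 1)) n →
        ∃ x' : M (n + 1) (j + 1), t n (j + 1) x' = x ∧
          d (n + 1) (j + 1) x' = (f : ∀ m, M m (j + 1 + 1)) (n + 1) := by
      intro n x hx
      obtain ⟨y, hy⟩ := hmem (n + 1)
      have h1 : d n (j + 1) (t n (j + 1) y - x) = 0 := by
        rw [map_sub, hcomm, hy, hx, f.2 n, sub_self]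
      obtain ⟨z, hz⟩ := (dd n _).mp h1
      obtain ⟨z', hz'⟩ := hsurj n j z
      refine ⟨y - d (n + 1) j z', ?_, ?_⟩
      · rw [map_sub, ← hcomm, hz', hz]
        abel
      · have h2 : d (n + 1) (j + 1) (d (n + 1) j z') = 0 := by
          rw [dd]
          exact ⟨z', rfl⟩
        rw [map_sub, hy, h2, sub_zero]
    choose F hF1 hF2 using step
    obtain ⟨x0, hx0⟩ := hmem 0
    let X : ∀ n : ℕ, {x : M n (j + 1) // d n (j + 1) x = (f : ∀ m, M m (j + 1 + 1)) n} :=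
      fun n => Nat.rec ⟨x0, hx0⟩ (fun n p => ⟨F n p.1 p.2, hF2 n p.1 p.2⟩) n
    have hcompat : ∀ n, t n (j + 1) ((X (n + 1)).1) = (X n).1 :=
      fun n => hF1 n (X n).1 (X n).2
    refine ⟨⟨fun n => (X n).1, fun n => hcompat n⟩, ?_⟩
    apply Subtype.ext
    funext n
    exact (X n).2
end

section
/- Let R be a PID, A and B R-modules, C ⊆ A* = Hom_R(A,R) a submodule with A*/C torsion-free, and M any R-module. Then the natural map θ: Hom_R(B,M) ⊗_R C → Hom_R(A ⊗_R B, M), θ(g ⊗ f)(x ⊗ y) = f(x)g(y), is injective. -/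
open TensorProduct

variable (R : Type*) [CommRing R] [IsDomain R] [IsPrincipalIdealRing R]
variable (A B M : Type*)
variable [AddCommGroup A] [Module R A] [AddCommGroup B] [Module R B]
variable [AddCommGroup M] [Module R M]
variable (C : Submodule R (A →ₗ[R] R))

/-- The natural map `θ : Hom_R(B,M) ⊗_R C → Hom_R(A ⊗_R B, M)`,
`θ(g ⊗ f)(x ⊗ y) = f(x) • g(y)`. -/
noncomputable def thetaMap :
    ((B →ₗ[R] M) ⊗[R] C) →ₗ[R] ((A ⊗[R] B) →ₗ[R] M) :=
  TensorProduct.lift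
    (LinearMap.mk₂ R
      (fun (g : B →ₗ[R] M) (f : C) => TensorProduct.lift (LinearMap.smulRight (f : A →ₗ[R] R) g))
      (fun g g' f => by
        apply TensorProduct.ext'
        intro x y
        simp [smul_add])
      (fun r g f => by
        apply TensorProduct.ext'
        intro x y
        simp only [TensorProduct.lift.tmul, LinearMap.smulRight_apply, LinearMap.smul_apply]
        rw [smul_comm])
      (fun g f f' => by
        apply TensorProduct.ext'
        intro x y
        simp [add_smul])
      (fun r g f => by
        apply TensorProduct.ext'
        intro x y
        simp [mul_smul]))

/-!
`θ` is the currying isomorphism `Hom(A ⊗ B, M) ≃ Hom(A, Hom(B, M))` composed with the map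
`N ⊗ C → Hom(A, N)`, `n ⊗ f ↦ f(·) • n`, for `N = Hom(B, M)`; we show the latter is injective for
every `N`. Injectivity is preserved by isomorphisms, finite products and direct sums in `N`, and
every tensor comes from `N₀ ⊗ C` for a finitely generated `N₀ ≤ N`, so by the structure theorem
over a PID it suffices to treat `N = R`, where the map is the inclusion `C ⊆ A*`, and
`N = R/(q)` with `q ≠ 0`. There `N ⊗ C = C/qC`, and an `f ∈ C` all of whose values are divisible
by `q` is `q • g` for some `g ∈ A*`; torsion-freeness of `A*/C` puts `g` in `C`, so `f ∈ qC`.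
-/

lemma Module.Dual.exists_smul_eq_of_forall_dvd {R A : Type*} [CommRing R] [IsDomain R]
    [AddCommMonoid A] [Module R A] (f : Module.Dual R A) {q : R} (hq : q ≠ 0)
    (hf : ∀ x, q ∣ f x) : ∃ g : Module.Dual R A, q • g = f := by
  have hinj : Function.Injective (LinearMap.mulLeft R q) := mul_right_injective₀ hq
  let e := LinearEquiv.ofInjective (LinearMap.mulLeft R q) hinj
  refine ⟨e.symm.toLinearMap ∘ₗ f.codRestrict _ fun x ↦ ?_, ?_⟩
  · obtain ⟨r, hr⟩ := hf x
    exact ⟨r, hr.symm⟩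
  · ext x
    exact LinearEquiv.ofInjective_symm_apply (h := hinj) (f := LinearMap.mulLeft R q) _

namespace Submodule

open Function LinearMap TensorProduct
open scoped DirectSum

section CommSemiring

variable {R A N N' : Type*} [CommSemiring R] [AddCommMonoid A] [Module R A]
  [AddCommMonoid N] [Module R N] [AddCommMonoid N'] [Module R N']
  (C : Submodule R (Module.Dual R A))

noncomputable def tensorDualHom (N : Type*) [AddCommMonoid N] [Module R N] :
    N ⊗[R] C →ₗ[R] A →ₗ[R] N :=
  TensorProduct.lift (smulRightₗ ∘ₗ C.subtype).flip

@[simp]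
lemma tensorDualHom_tmul (n : N) (f : C) (x : A) :
    C.tensorDualHom N (n ⊗ₜ f) x = (f : Module.Dual R A) x • n :=
  rfl

lemma tensorDualHom_comp_rTensor (g : N →ₗ[R] N') :
    C.tensorDualHom N' ∘ₗ g.rTensor C = g.compRight R ∘ₗ C.tensorDualHom N := by
  ext; simp

lemma rTensor_eq_of_tensorDualHom_eq (g : N →ₗ[R] N') (hN' : Injective (C.tensorDualHom N'))
    {s t : N ⊗[R] C} (h : C.tensorDualHom N s = C.tensorDualHom N t) :
    g.rTensor C s = g.rTensor C t := by
  have hg := LinearMap.congr_fun (C.tensorDualHom_comp_rTensor g)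
  simp only [LinearMap.comp_apply] at hg
  exact hN' (by rw [hg, hg, h])

lemma injective_tensorDualHom_of_equiv (e : N ≃ₗ[R] N') (hN' : Injective (C.tensorDualHom N')) :
    Injective (C.tensorDualHom N) := fun _ _ h ↦
  (LinearEquiv.rTensor C e).injective (C.rTensor_eq_of_tensorDualHom_eq e.toLinearMap hN' h)

lemma injective_tensorDualHom_prod (hN : Injective (C.tensorDualHom N))
    (hN' : Injective (C.tensorDualHom N')) : Injective (C.tensorDualHom (N × N')) := by
  have hprod : (prodLeft R R N N' C).toLinearMap =
      ((LinearMap.fst R N N').rTensor C).prod ((LinearMap.snd R N N').rTensor C) :=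
    TensorProduct.ext' fun _ _ ↦ rfl
  intro s t h
  apply (prodLeft R R N N' C).injective
  rw [← LinearEquiv.coe_coe, hprod]
  exact Prod.ext (C.rTensor_eq_of_tensorDualHom_eq _ hN h) (C.rTensor_eq_of_tensorDualHom_eq _ hN' h)

lemma injective_tensorDualHom_directSum {ι : Type*} [DecidableEq ι] {V : ι → Type*}
    [∀ i, AddCommMonoid (V i)] [∀ i, Module R (V i)]
    (hV : ∀ i, Injective (C.tensorDualHom (V i))) : Injective (C.tensorDualHom (⨁ i, V i)) := by
  have hcomp (u : (⨁ i, V i) ⊗[R] C) (i : ι) :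
      directSumLeft R R V C u i = (DirectSum.component R ι V i).rTensor C u := by
    induction u using TensorProduct.induction_on <;> simp_all [← DirectSum.apply_eq_component]
  intro s t h
  apply (directSumLeft R R V C).injective
  ext i
  rw [hcomp, hcomp]
  exact C.rTensor_eq_of_tensorDualHom_eq _ (hV i) h

lemma injective_tensorDualHom_self : Injective (C.tensorDualHom R) := by
  have h : C.tensorDualHom R = C.subtype ∘ₗ (TensorProduct.lid R C).toLinearMap := by
    ext; simp [mul_comm]
  rw [h]
  exact C.injective_subtype.comp (TensorProduct.lid R C).injective

end CommSemiring

section PrincipalIdealDomain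

variable {R A : Type*} [CommRing R] [IsDomain R] [AddCommMonoid A] [Module R A]
  {C : Submodule R (Module.Dual R A)}

lemma mem_span_singleton_smul_top_of_forall_dvd
    (hC : ∀ (f : Module.Dual R A) (r : R), r ≠ 0 → r • f ∈ C → f ∈ C) {q : R} (hq : q ≠ 0)
    (f : C) (hf : ∀ x, q ∣ (f : Module.Dual R A) x) :
    f ∈ Ideal.span {q} • (⊤ : Submodule R C) := by
  obtain ⟨g, hg⟩ := Module.Dual.exists_smul_eq_of_forall_dvd (f : Module.Dual R A) hq hf
  have hgC : g ∈ C := hC g q hq (hg ▸ f.2)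
  have hfg : f = q • ⟨g, hgC⟩ := Subtype.ext hg.symm
  exact hfg ▸ smul_mem_smul (Ideal.mem_span_singleton_self q) trivial

lemma injective_tensorDualHom_quotient
    (hC : ∀ (f : Module.Dual R A) (r : R), r ≠ 0 → r • f ∈ C → f ∈ C) {q : R} (hq : q ≠ 0) :
    Injective (C.tensorDualHom (R ⧸ Ideal.span {q})) := by
  rw [injective_iff_map_eq_zero]
  intro t ht
  obtain ⟨f, rfl⟩ : ∃ f : C, (quotTensorEquivQuotSMul C _).symm (Quotient.mk f) = t := by
    obtain ⟨f, hf⟩ := Quotient.mk_surjective _ (quotTensorEquivQuotSMul C _ t)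
    exact ⟨f, by rw [hf, LinearEquiv.symm_apply_apply]⟩
  rw [quotTensorEquivQuotSMul_symm_mk] at ht
  have hf (x : A) : q ∣ (f : Module.Dual R A) x := by
    simpa [Algebra.smul_def, Ideal.Quotient.eq_zero_iff_mem, Ideal.mem_span_singleton]
      using LinearMap.congr_fun ht x
  rw [(Quotient.mk_eq_zero _).mpr (mem_span_singleton_smul_top_of_forall_dvd hC hq f hf),
    map_zero]

variable [IsPrincipalIdealRing R]

lemma injective_tensorDualHom_of_finite
    (hC : ∀ (f : Module.Dual R A) (r : R), r ≠ 0 → r • f ∈ C → f ∈ C)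
    (N : Type*) [AddCommGroup N] [Module R N] [Module.Finite R N] :
    Injective (C.tensorDualHom N) := by
  classical
  obtain ⟨n, ι, _, p, hp, _, ⟨φ⟩⟩ := Module.equiv_free_prod_directSum R N
  refine C.injective_tensorDualHom_of_equiv φ (C.injective_tensorDualHom_prod ?_ ?_)
  · exact C.injective_tensorDualHom_of_equiv (finsuppLEquivDirectSum R R (Fin n))
      (C.injective_tensorDualHom_directSum fun _ ↦ C.injective_tensorDualHom_self)
  · exact C.injective_tensorDualHom_directSum fun i ↦
      injective_tensorDualHom_quotient hC (pow_ne_zero _ (hp i).ne_zero)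

lemma injective_tensorDualHom
    (hC : ∀ (f : Module.Dual R A) (r : R), r ≠ 0 → r • f ∈ C → f ∈ C)
    (N : Type*) [AddCommGroup N] [Module R N] :
    Injective (C.tensorDualHom N) := by
  rw [injective_iff_map_eq_zero]
  intro t ht
  obtain ⟨N₀, _, ht₀⟩ := exists_finite_submodule_left_of_setFinite {t} (Set.finite_singleton t)
  obtain ⟨t₀, rfl⟩ := ht₀ rfl
  have h₀ : N₀.subtype ∘ₗ C.tensorDualHom N₀ t₀ = N₀.subtype ∘ₗ 0 := by
    rw [LinearMap.comp_zero, ← ht]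
    exact (LinearMap.congr_fun (C.tensorDualHom_comp_rTensor N₀.subtype) t₀).symm
  have ht₀ : t₀ = 0 := (injective_iff_map_eq_zero _).mp (C.injective_tensorDualHom_of_finite hC N₀)
    t₀ ((LinearMap.cancel_left N₀.injective_subtype).mp h₀)
  rw [ht₀, map_zero]

end PrincipalIdealDomain

end Submodule

/-- **Injectivity of `θ` (Lemma A.2 of the paper).**  Let `R` be a PID, `A`, `B`, `M`
`R`-modules, and `C ⊆ A* = Hom_R(A,R)` a submodule such that `A*/C` is torsion-free.
Then the natural map `θ : Hom_R(B,M) ⊗_R C → Hom_R(A ⊗_R B, M)`, sending `g ⊗ f` to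
`x ⊗ y ↦ f(x) g(y)`, is injective. -/
theorem thetaMap_injective
    (hC : ∀ (f : A →ₗ[R] R) (r : R), r ≠ 0 → r • f ∈ C → f ∈ C) :
    Function.Injective (thetaMap R A B M C) := by
  have hθ : thetaMap R A B M C =
      (TensorProduct.lift.equiv (.id R) A B M).toLinearMap ∘ₗ C.tensorDualHom (B →ₗ[R] M) := by
    ext g f x y
    simp [thetaMap, TensorProduct.lift.equiv]
  rw [hθ, LinearMap.coe_comp]
  exact (TensorProduct.lift.equiv _ A B M).injective.comp (C.injective_tensorDualHom hC _)
end
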